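/- arXiv:2302.01373 — 2 statements merged into one kernel-verified Lean document; each statement's English description precedes it below -/
import Mathlib

section
/- Let T be a rooted tree, b > 1, with heavy edges defined as edges whose endpoints have equal layer (layer(v) = k iff n/b^{k+1} < s(v) ≤ n/b^k, n = |T|). Let H be a connected component ('heavy tree') of T after removing light edges, with root r. Then H has at most b leaves (leaves of H, i.e., nodes of H with no child in H). -/
/-!
The subtrees hanging below distinct leaves of a heavy tree `H` are disjoint, since no leaf of `H`
has a descendant in `H` other than itself, and they all lie in the subtree of the root `r` of `H`.
Every node of `H` has the layer of `r`, so each of these subtrees has more than `n / b ^ (L r + 1)`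
nodes, while the subtree of `r` has at most `n / b ^ L r = b * (n / b ^ (L r + 1))` nodes.
-/

open Function

theorem Set.ncard_mul_le_of_pairwiseDisjoint {ι α : Type*} {t : Set ι} {S : ι → Set α}
    {U : Set α} {x : ℝ} (ht : t.Finite) (hU : U.Finite) (hdisj : t.PairwiseDisjoint S)
    (hsub : ∀ i ∈ t, S i ⊆ U) (hx : ∀ i ∈ t, x ≤ (S i).ncard) :
    t.ncard * x ≤ U.ncard := by
  have hS : ∀ i ∈ t, (S i).Finite := fun i hi => hU.subset (hsub i hi)
  calc t.ncard * x = ∑ _ ∈ ht.toFinset, x := by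
        rw [Finset.sum_const, nsmul_eq_mul, Set.ncard_eq_toFinset_card t ht]
    _ ≤ ∑ i ∈ ht.toFinset, ((S i).ncard : ℝ) :=
        Finset.sum_le_sum fun i hi => hx i (ht.mem_toFinset.1 hi)
    _ = (⋃ i ∈ t, S i).ncard := by
        rw [ht.ncard_biUnion hS hdisj, finsum_mem_eq_finite_toFinset_sum _ ht, Nat.cast_sum]
    _ ≤ U.ncard := by exact_mod_cast Set.ncard_le_ncard (Set.iUnion₂_subset hsub) hU

theorem Function.IsPeriodicPt.eq_of_iterate_eq_fixedPt {V : Type*} {f : V → V} {x v : V}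
    {t N : ℕ} (hv : IsPeriodicPt f t v) (ht : 0 < t) (hx : f x = x) (hN : f^[N] v = x) :
    v = x :=
  calc v = f^[t * N] v := (hv.mul_const N).eq.symm
    _ = f^[t * N - N] (f^[N] v) := by
        rw [← iterate_add_apply, Nat.sub_add_cancel (Nat.le_mul_of_pos_left N ht)]
    _ = x := by rw [hN, iterate_fixed hx]

namespace HeavyLight

variable {V : Type*} (parent : V → V)

def subtree (u : V) : Set V := {w | ∃ k, parent^[k] w = u}

def heavyTree (L : V → ℕ) (r : V) : Set V :=
  {v | ∃ k, parent^[k] v = r ∧ ∀ j ≤ k, L (parent^[j] v) = L r}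

def leaves (H : Set V) : Set V := {v | v ∈ H ∧ ∀ w, w ≠ v → parent w = v → w ∉ H}

variable {parent}

theorem subtree_subset_of_mem {u v : V} (h : v ∈ subtree parent u) :
    subtree parent v ⊆ subtree parent u := by
  obtain ⟨k, hk⟩ := h
  rintro w ⟨a, ha⟩
  exact ⟨k + a, by rw [iterate_add_apply, ha, hk]⟩

theorem mem_subtree_or_mem_subtree {u u' w : V} (hu : w ∈ subtree parent u)
    (hu' : w ∈ subtree parent u') : u ∈ subtree parent u' ∨ u' ∈ subtree parent u := by
  obtain ⟨a, rfl⟩ := hu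
  obtain ⟨c, rfl⟩ := hu'
  rcases le_total a c with h | h
  · exact Or.inl ⟨c - a, by rw [← iterate_add_apply, Nat.sub_add_cancel h]⟩
  · exact Or.inr ⟨a - c, by rw [← iterate_add_apply, Nat.sub_add_cancel h]⟩

variable {L : V → ℕ} {r : V}

theorem iterate_mem_heavyTree {v : V} {i k : ℕ} (hk : parent^[k] v = r)
    (hl : ∀ j ≤ k, L (parent^[j] v) = L r) (hi : i ≤ k) : parent^[i] v ∈ heavyTree parent L r :=
  ⟨k - i, by rw [← iterate_add_apply, Nat.sub_add_cancel hi, hk], fun j hj => by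
    rw [← iterate_add_apply]
    exact hl (j + i) (by omega)⟩

theorem layer_eq_of_mem_heavyTree {v : V} (hv : v ∈ heavyTree parent L r) : L v = L r := by
  obtain ⟨k, -, hl⟩ := hv
  exact hl 0 k.zero_le

theorem heavyTree_subset_subtree : heavyTree parent L r ⊆ subtree parent r :=
  fun _ ⟨k, hk, _⟩ => ⟨k, hk⟩

theorem iterate_mem_heavyTree_of_le {root : V} (hroot : parent root = root)
    (hacyc : ∀ v : V, ∃ n : ℕ, parent^[n] v = root) {v : V} {i j : ℕ}
    (hv : v ∈ heavyTree parent L r) (hj : parent^[j] v ∈ heavyTree parent L r) (hij : i ≤ j) :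
    parent^[i] v ∈ heavyTree parent L r := by
  obtain ⟨k, hk, hl⟩ := hv
  rcases le_or_gt i k with hik | hki
  · exact iterate_mem_heavyTree hk hl hik
  -- Otherwise `parent^[j] v` is a strict ancestor of `r` that descends from `r`:
  -- `r` lies on a cycle, hence is the root.
  obtain ⟨m, hm, -⟩ := hj
  have hr_periodic : IsPeriodicPt parent (m + (j - k)) r :=
    calc parent^[m + (j - k)] r = parent^[m] (parent^[j - k + k] v) := by
          rw [iterate_add_apply, iterate_add_apply, hk]
      _ = r := by rw [Nat.sub_add_cancel (by omega), hm]
  obtain ⟨N, hN⟩ := hacyc r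
  have hr : r = root := hr_periodic.eq_of_iterate_eq_fixedPt (by omega) hroot hN
  have hvi : parent^[i] v = r := by
    rw [← Nat.sub_add_cancel hki.le, iterate_add_apply, hk, hr, iterate_fixed hroot]
  rw [hvi]
  exact ⟨0, rfl, fun j hj => by rw [Nat.le_zero.1 hj, iterate_zero_apply]⟩

theorem eq_of_mem_leaves_of_iterate_eq {root : V} (hroot : parent root = root)
    (hacyc : ∀ v : V, ∃ n : ℕ, parent^[n] v = root) {l v : V}
    (hl : l ∈ leaves parent (heavyTree parent L r)) (hv : v ∈ heavyTree parent L r) :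
    ∀ j, parent^[j] v = l → v = l
  | 0, hj => hj
  | j + 1, hj => by
    have hc : parent^[j] v ∈ heavyTree parent L r :=
      iterate_mem_heavyTree_of_le hroot hacyc hv (hj ▸ hl.1) j.le_succ
    have hpc : parent (parent^[j] v) = l := by rwa [iterate_succ_apply'] at hj
    exact eq_of_mem_leaves_of_iterate_eq hroot hacyc hl hv j
      (not_not.1 fun hne => hl.2 _ hne hpc hc)

theorem pairwiseDisjoint_subtree_leaves {root : V} (hroot : parent root = root)
    (hacyc : ∀ v : V, ∃ n : ℕ, parent^[n] v = root) :
    (leaves parent (heavyTree parent L r)).PairwiseDisjoint (subtree parent) := by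
  intro l hl l' hl' hne
  refine Set.disjoint_left.2 fun w hw hw' => ?_
  rcases mem_subtree_or_mem_subtree hw hw' with ⟨d, hd⟩ | ⟨d, hd⟩
  · exact hne (eq_of_mem_leaves_of_iterate_eq hroot hacyc hl' hl.1 d hd)
  · exact hne (eq_of_mem_leaves_of_iterate_eq hroot hacyc hl hl'.1 d hd).symm

end HeavyLight

open HeavyLight in
theorem stmt5_general {V : Type*} [Fintype V]
    (root : V) (parent : V → V)
    (hroot : parent root = root)
    (hacyc : ∀ v : V, ∃ n : ℕ, parent^[n] v = root)
    (n : ℕ)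
    (s : V → ℕ)
    (hs : ∀ u : V, s u = Set.ncard {w : V | ∃ k : ℕ, parent^[k] w = u})
    (b : ℝ) (hb : 1 < b)
    (L : V → ℕ)
    (hL : ∀ v : V, (n : ℝ) / b ^ (L v + 1) < (s v : ℝ) ∧ (s v : ℝ) ≤ (n : ℝ) / b ^ L v)
    (r : V) (H : Set V)
    (hH : ∀ v : V, v ∈ H ↔ ∃ k : ℕ, parent^[k] v = r ∧ ∀ j ≤ k, L (parent^[j] v) = L r) :
    (Set.ncard {v : V | v ∈ H ∧ ∀ w : V, w ≠ v → parent w = v → w ∉ H} : ℝ) ≤ b := by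
  obtain rfl : H = heavyTree parent L r := Set.ext hH
  obtain rfl : s = fun u => (subtree parent u).ncard := funext hs
  set x : ℝ := n / b ^ (L r + 1) with hx
  have hleaf : ∀ l ∈ leaves parent (heavyTree parent L r), x ≤ (subtree parent l).ncard :=
    fun l hl => by simpa [layer_eq_of_mem_heavyTree hl.1] using (hL l).1.le
  have hr_le : ((subtree parent r).ncard : ℝ) ≤ b * x :=
    calc _ ≤ n / b ^ L r := (hL r).2
      _ = b * x := by rw [hx, pow_succ, ← div_div, mul_div_cancel₀ _ (zero_lt_one.trans hb).ne']
  have hx_pos : 0 < x := by nlinarith [(hL r).1]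
  have hcount := Set.ncard_mul_le_of_pairwiseDisjoint (Set.toFinite _) (Set.toFinite _)
    (pairwiseDisjoint_subtree_leaves hroot hacyc)
    (fun l hl => subtree_subset_of_mem (heavyTree_subset_subtree hl.1)) hleaf
  exact le_of_mul_le_mul_right (hcount.trans hr_le) hx_pos

/-- A heavy tree H (maximal connected subtree of heavy edges, i.e., edges between
nodes of equal layer) with root r has at most b leaves. -/
theorem stmt5 {V : Type*} [Fintype V]
    (root : V) (parent : V → V)
    (hroot : parent root = root)
    (hacyc : ∀ v : V, ∃ n : ℕ, parent^[n] v = root)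
    (n : ℕ) (hn : n = Fintype.card V)
    (s : V → ℕ)
    (hs : ∀ u : V, s u = Set.ncard {w : V | ∃ k : ℕ, parent^[k] w = u})
    (b : ℝ) (hb : 1 < b)
    (L : V → ℕ)
    (hL : ∀ v : V, (n : ℝ) / b ^ (L v + 1) < (s v : ℝ) ∧ (s v : ℝ) ≤ (n : ℝ) / b ^ L v)
    (r : V) (H : Set V)
    (hH : ∀ v : V, v ∈ H ↔ ∃ k : ℕ, parent^[k] v = r ∧ ∀ j ≤ k, L (parent^[j] v) = L r) :
    (Set.ncard {v : V | v ∈ H ∧ ∀ w : V, w ≠ v → parent w = v → w ∉ H} : ℝ) ≤ b :=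
  stmt5_general root parent hroot hacyc n s hs b hb L hL r H hH
end

section
/- Gadget degree-reduction lemma (path-length bound): let C be a rooted tree with N nodes in which every edge (v,z) from parent v to child z of a designated 'interval' type satisfies s(v) ≥ s(z)·log N (where s is subtree size), and in which any root-to-leaf path contains at most d edges not of interval type. Then the depth of C is at most d + O(log N / log log N). -/
/-!
Along the path from a node to the root, subtree sizes never decrease and get multiplied by at
least `log N` across every interval edge. Since they stay between `1` and `N`, the path has at
most `log N / log log N` interval edges, and at most `d` other edges.
-/

open Finset Real

section Subtree

variable {α : Type*} (f : α → α)

def subtree (u : α) : Set α := {w | ∃ k, f^[k] w = u}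

theorem self_mem_subtree (u : α) : u ∈ subtree f u := ⟨0, rfl⟩

theorem subtree_subset_subtree_apply (u : α) : subtree f u ⊆ subtree f (f u) := by
  rintro w ⟨k, hk⟩
  exact ⟨k + 1, by rw [Function.iterate_succ_apply', hk]⟩

variable [Finite α]

theorem one_le_ncard_subtree (u : α) : 1 ≤ (subtree f u).ncard :=
  (Set.ncard_pos (Set.toFinite _)).mpr ⟨u, self_mem_subtree f u⟩

theorem ncard_subtree_le_ncard_subtree_apply (u : α) :
    (subtree f u).ncard ≤ (subtree f (f u)).ncard :=
  Set.ncard_le_ncard (subtree_subset_subtree_apply f u)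

end Subtree

theorem mul_pow_card_filter_le {a : ℕ → ℝ} {P : ℕ → Prop} [DecidablePred P] {L : ℝ}
    (hL : 0 ≤ L) {m : ℕ} (hmono : ∀ j < m, a j ≤ a (j + 1))
    (hstep : ∀ j < m, P j → a j * L ≤ a (j + 1)) :
    a 0 * L ^ #{j ∈ range m | P j} ≤ a m := by
  induction m with
  | zero => simp
  | succ m ih =>
    have ih := ih (fun j hj => hmono j (by omega)) (fun j hj => hstep j (by omega))
    rw [range_add_one, filter_insert]
    by_cases hm : P m
    · rw [if_pos hm, card_insert_of_notMem (by simp), pow_succ, ← mul_assoc]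
      exact (mul_le_mul_of_nonneg_right ih hL).trans (hstep m m.lt_succ_self hm)
    · rw [if_neg hm]
      exact ih.trans (hmono m m.lt_succ_self)

theorem nat_le_log_div_log_of_pow_le {L x : ℝ} {k : ℕ} (hL : 1 < L) (h : L ^ k ≤ x) :
    (k : ℝ) ≤ log x / log L := by
  have hx : 0 < x := (pow_pos (by linarith) k).trans_le h
  rwa [le_div_iff₀ (log_pos hL), ← pow_le_iff_le_log (by linarith) hx]

theorem one_lt_log_of_four_le {x : ℝ} (hx : 4 ≤ x) : 1 < log x := by
  rw [lt_log_iff_exp_lt (by linarith)]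
  linarith [exp_one_lt_d9]

/-- Gadget degree-reduction path-length bound: in a rooted tree with N nodes in which
every interval edge (v, z) satisfies s(v) ≥ s(z)·log N and every root-to-leaf path has
at most d non-interval edges, the depth is at most d + log N / log log N + O(1). -/
theorem stmt15 : ∃ C : ℝ, ∀ (V : Type) [Fintype V],
    ∀ (root : V) (parent : V → V),
    parent root = root →
    (∀ v : V, ∃ n : ℕ, parent^[n] v = root) →
    ∀ N : ℕ, N = Fintype.card V → 4 ≤ N →
    ∀ s : V → ℕ, (∀ u : V, s u = Set.ncard {w : V | ∃ k : ℕ, parent^[k] w = u}) →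
    ∀ IE : V → Prop,
    (∀ z : V, z ≠ root → IE z → (s z : ℝ) * Real.log N ≤ (s (parent z) : ℝ)) →
    ∀ d : ℕ,
    (∀ (v : V) (n : ℕ), (∀ j < n, parent^[j] v ≠ root) →
      Set.ncard {j : ℕ | j < n ∧ ¬IE (parent^[j] v)} ≤ d) →
    ∀ v : V, ∃ n : ℕ, parent^[n] v = root ∧
      (n : ℝ) ≤ (d : ℝ) + Real.log N / Real.log (Real.log N) + C := by
  classical
  refine ⟨0, fun V _ root parent _ hreach N hN hN4 s hs IE hIE d hd v => ?_⟩
  change ∀ u, s u = (subtree parent u).ncard at hs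
  obtain ⟨n, hn, hbelow⟩ : ∃ n, parent^[n] v = root ∧ ∀ j < n, parent^[j] v ≠ root :=
    ⟨_, Nat.find_spec (hreach v), fun _ => Nat.find_min (hreach v)⟩
  have hlogN : 1 < log N := one_lt_log_of_four_le (by exact_mod_cast hN4)
  have hgrowth : log N ^ #{j ∈ range n | IE (parent^[j] v)} ≤ N := calc
    _ ≤ s v * log N ^ #{j ∈ range n | IE (parent^[j] v)} :=
      le_mul_of_one_le_left (by positivity) (by rw [hs]; exact_mod_cast one_le_ncard_subtree _ v)
    _ ≤ s (parent^[n] v) := by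
      refine mul_pow_card_filter_le (a := fun j => (s (parent^[j] v) : ℝ)) (by linarith)
        (fun j _ => ?_) (fun j hj hIEj => ?_) <;> rw [Function.iterate_succ_apply']
      · rw [hs, hs]; exact_mod_cast ncard_subtree_le_ncard_subtree_apply _ _
      · exact hIE _ (hbelow j hj) hIEj
    _ ≤ N := by
      rw [hn, hs, hN, ← Nat.card_eq_fintype_card]
      exact_mod_cast Set.ncard_le_card _
  have hnonIE : #{j ∈ range n | ¬IE (parent^[j] v)} ≤ d := by
    simpa [← Set.ncard_coe_finset] using hd v n hbelow
  have hsplit := card_filter_add_card_filter_not (s := range n) (fun j => IE (parent^[j] v))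
  rw [card_range] at hsplit
  refine ⟨n, hn, ?_⟩
  have hIE_count := nat_le_log_div_log_of_pow_le hlogN hgrowth
  have : (n : ℝ) ≤ d + #{j ∈ range n | IE (parent^[j] v)} := by exact_mod_cast (by omega)
  linarith
end
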